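/- Let φ = (1+√5)/2 and let X ⊆ S² ⊆ ℝ³ be the 6-point set consisting of the unit vectors (0, 1, φ)/√(1+φ²), (0, 1, −φ)/√(1+φ²), (1, φ, 0)/√(1+φ²), (1, −φ, 0)/√(1+φ²), (φ, 0, 1)/√(1+φ²), (−φ, 0, 1)/√(1+φ²) (an antipodal half of the 12 vertices of a regular icosahedron). Then X is a spherical design of harmonic index 8 and also a spherical design of harmonic index 14 on S². In particular, the minimal cardinality A(3,8) of a harmonic index 8-design on S² satisfies A(3,8) ≤ 6. -/

import Mathlib

open scoped BigOperators Classical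

/-- The Laplacian `∑ i, ∂²/∂xᵢ²` of a multivariate polynomial. -/
noncomputable def mvLaplacian {n : ℕ} (f : MvPolynomial (Fin n) ℝ) : MvPolynomial (Fin n) ℝ :=
  ∑ i, MvPolynomial.pderiv i (MvPolynomial.pderiv i f)

/-- A finite nonempty subset `X` of the unit sphere `S^{n-1} ⊆ ℝ^n` is a spherical design of
harmonic index `t` if `∑_{x ∈ X} f(x) = 0` for every harmonic homogeneous polynomial `f`
of degree `t`. -/
def IsHarmonicIndexDesign (n t : ℕ) (X : Finset (Fin n → ℝ)) : Prop :=
  X.Nonempty ∧ (∀ x ∈ X, ∑ i, x i ^ 2 = 1) ∧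
    ∀ f : MvPolynomial (Fin n) ℝ, mvLaplacian f = 0 → f.IsHomogeneous t →
      ∑ x ∈ X, MvPolynomial.eval x f = 0

noncomputable def goldenRatio' : ℝ := (1 + Real.sqrt 5) / 2

/-- An antipodal half of the 12 vertices of a regular icosahedron, as unit vectors in `ℝ³`. -/
noncomputable def icosahedronHalf : Finset (Fin 3 → ℝ) :=
  {(Real.sqrt (1 + goldenRatio' ^ 2))⁻¹ • ![0, 1, goldenRatio'],
   (Real.sqrt (1 + goldenRatio' ^ 2))⁻¹ • ![0, 1, -goldenRatio'],
   (Real.sqrt (1 + goldenRatio' ^ 2))⁻¹ • ![1, goldenRatio', 0],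
   (Real.sqrt (1 + goldenRatio' ^ 2))⁻¹ • ![1, -goldenRatio', 0],
   (Real.sqrt (1 + goldenRatio' ^ 2))⁻¹ • ![goldenRatio', 0, 1],
   (Real.sqrt (1 + goldenRatio' ^ 2))⁻¹ • ![-goldenRatio', 0, 1]}

namespace IcosaAux
open MvPolynomial

noncomputable def pd (i : Fin 3) : Module.End ℝ (MvPolynomial (Fin 3) ℝ) :=
  (pderiv i).toLinearMap

lemma pd_apply (i : Fin 3) (f : MvPolynomial (Fin 3) ℝ) : pd i f = pderiv i f := rfl

lemma pderiv_comm (i j : Fin 3) (f : MvPolynomial (Fin 3) ℝ) :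
    pderiv i (pderiv j f) = pderiv j (pderiv i f) := by
  induction f using MvPolynomial.induction_on' with
  | monomial m c =>
    rcases eq_or_ne i j with rfl | hij
    · rfl
    · simp only [pderiv_monomial]
      rw [tsub_right_comm]
      congr 1
      have h1 : (m - Finsupp.single j 1 : Fin 3 →₀ ℕ) i = m i := by
        rw [Finsupp.tsub_apply, Finsupp.single_apply]
        simp [hij.symm]
      have h2 : (m - Finsupp.single i 1 : Fin 3 →₀ ℕ) j = m j := by
        rw [Finsupp.tsub_apply, Finsupp.single_apply]
        simp [hij]
      rw [h1, h2]; ring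
  | add p q hp hq => simp [map_add, hp, hq]

lemma pd_comm (i j : Fin 3) : pd i * pd j = pd j * pd i := by
  refine LinearMap.ext fun f => ?_
  simpa [Module.End.mul_apply, pd_apply] using pderiv_comm i j f

/-- The commutative subalgebra of differential operators. -/
noncomputable instance : CommRing (Algebra.adjoin ℝ (Set.range pd)) :=
  Algebra.adjoinCommRingOfComm ℝ (by
    rintro a ⟨i, rfl⟩ b ⟨j, rfl⟩
    exact pd_comm i j)

/-- apply a polynomial as a differential operator -/
noncomputable def E : MvPolynomial (Fin 3) ℝ →ₐ[ℝ] Module.End ℝ (MvPolynomial (Fin 3) ℝ) :=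
  (Subalgebra.val _).comp
    (aeval (R := ℝ) fun i => (⟨pd i, Algebra.subset_adjoin ⟨i, rfl⟩⟩ : Algebra.adjoin ℝ (Set.range pd)))

lemma E_X (i : Fin 3) : E (X i) = pd i := by
  simp [E]

lemma E_laplacian (f : MvPolynomial (Fin 3) ℝ) : E (∑ i, X i ^ 2) f = mvLaplacian f := by
  rw [map_sum, LinearMap.sum_apply, mvLaplacian]
  refine Finset.sum_congr rfl fun i _ => ?_
  rw [map_pow, E_X, pow_two, Module.End.mul_apply, pd_apply, pd_apply]

noncomputable def La (a : Fin 3 → ℝ) : Module.End ℝ (MvPolynomial (Fin 3) ℝ) :=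
  ∑ i, a i • pd i

lemma La_pow_monomial (a : Fin 3 → ℝ) :
    ∀ (t : ℕ) (m : Fin 3 →₀ ℕ) (c : ℝ), (∑ j, m j) = t →
      ((La a) ^ t) (monomial m c) = C ((t.factorial : ℝ) * c * ∏ j, a j ^ m j) := by
  intro t
  induction t with
  | zero =>
    intro m c hm
    have hm0 : m = 0 := by
      ext j
      simpa using Finset.sum_eq_zero_iff.mp hm j (Finset.mem_univ j)
    subst hm0
    simp [monomial_zero']
  | succ t ih =>
    intro m c hm
    rw [pow_succ, Module.End.mul_apply]
    have hLa : (La a) (monomial m c)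
        = ∑ i, a i • monomial (m - Finsupp.single i 1) (c * m i) := by
      rw [La, LinearMap.sum_apply]
      refine Finset.sum_congr rfl fun i _ => ?_
      rw [LinearMap.smul_apply, pd_apply, pderiv_monomial]
    rw [hLa, map_sum]
    have hterm : ∀ i : Fin 3, ((La a) ^ t) (a i • monomial (m - Finsupp.single i 1) (c * m i))
        = C ((t.factorial : ℝ) * c * (m i : ℝ) * ∏ j, a j ^ m j) := by
      intro i
      rcases Nat.eq_zero_or_pos (m i) with h0 | hpos
      · rw [h0]
        simp
      · have hdeg : (∑ j, (m - Finsupp.single i 1 : Fin 3 →₀ ℕ) j) = t := by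
        -- ∑ = (t+1) - 1
          have hsum : ∀ j : Fin 3, (m - Finsupp.single i 1 : Fin 3 →₀ ℕ) j
              = m j - (Finsupp.single i 1 : Fin 3 →₀ ℕ) j := fun j => Finsupp.tsub_apply _ _ _
          have h1 : (∑ j, (m - Finsupp.single i 1 : Fin 3 →₀ ℕ) j)
              = (∑ j ∈ Finset.univ.erase i, m j) + (m i - 1) := by
            rw [← Finset.sum_erase_add _ _ (Finset.mem_univ i)]
            congr 1
            · refine Finset.sum_congr rfl fun j hj => ?_
              rw [hsum j, Finsupp.single_apply, if_neg (Finset.ne_of_mem_erase hj).symm]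
              simp
            · rw [hsum i, Finsupp.single_apply, if_pos rfl]
          have h2 : (∑ j ∈ Finset.univ.erase i, m j) + m i = t + 1 := by
            rw [Finset.sum_erase_add _ _ (Finset.mem_univ i)]
            exact hm
          omega
        rw [LinearMap.map_smul, ih _ _ hdeg, smul_eq_C_mul, ← map_mul]
        congr 1
        have hprod : a i * ∏ j, a j ^ (m - Finsupp.single i 1 : Fin 3 →₀ ℕ) j
            = ∏ j, a j ^ m j := by
          rw [← Finset.mul_prod_erase _ _ (Finset.mem_univ i),
              ← Finset.mul_prod_erase _ (fun j => a j ^ m j) (Finset.mem_univ i), ← mul_assoc]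
          congr 1
          · rw [Finsupp.tsub_apply, Finsupp.single_apply, if_pos rfl]
            rw [← pow_succ']
            congr 1
            omega
          · refine Finset.prod_congr rfl fun j hj => ?_
            rw [Finsupp.tsub_apply, Finsupp.single_apply, if_neg (Finset.ne_of_mem_erase hj).symm]
            simp
        calc a i * ((t.factorial : ℝ) * (c * m i) * ∏ j, a j ^ (m - Finsupp.single i 1 : Fin 3 →₀ ℕ) j)
            = (t.factorial : ℝ) * c * (m i : ℝ) *
              (a i * ∏ j, a j ^ (m - Finsupp.single i 1 : Fin 3 →₀ ℕ) j) := by ring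
          _ = _ := by rw [hprod]
    rw [Finset.sum_congr rfl fun i _ => hterm i, ← map_sum]
    congr 1
    have hmsum : ((m 0 : ℝ)) + (m 1 : ℝ) + (m 2 : ℝ) = (t : ℝ) + 1 := by
      have := hm
      rw [Fin.sum_univ_three] at this
      have h := congrArg (fun n : ℕ => (n : ℝ)) this
      push_cast at h
      linarith
    rw [Fin.sum_univ_three, Nat.factorial_succ]
    push_cast
    linear_combination ((t.factorial : ℝ) * c * ∏ j, a j ^ m j) * hmsum



lemma La_pow_homogeneous (a : Fin 3 → ℝ) (t : ℕ) (f : MvPolynomial (Fin 3) ℝ)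
    (hf : f.IsHomogeneous t) :
    ((La a) ^ t) f = C ((t.factorial : ℝ) * eval a f) := by
  conv_lhs => rw [← support_sum_monomial_coeff f]
  rw [map_sum]
  have hdeg : ∀ m ∈ f.support, (∑ j, m j) = t := by
    intro m hm
    have h1 := hf (mem_support_iff.mp hm)
    have h2 : (Finsupp.weight 1) m = ∑ j ∈ m.support, m j := by
      show Finsupp.weight (fun _ => 1) m = _
      rw [← Finsupp.degree_eq_weight_one]
      rfl
    rw [h2] at h1
    rw [← h1]
    exact (Finset.sum_subset (Finset.subset_univ _) (fun j _ hj => Finsupp.notMem_support_iff.mp hj)).symm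
  rw [Finset.sum_congr rfl fun m hm => La_pow_monomial a t m (coeff m f) (hdeg m hm), ← map_sum]
  congr 1
  rw [eval_eq', Finset.mul_sum]
  refine Finset.sum_congr rfl fun m _ => by ring

lemma E_linear (a : Fin 3 → ℝ) : E (∑ i, C (a i) * X i) = La a := by
  rw [map_sum, La]
  refine Finset.sum_congr rfl fun i _ => ?_
  rw [map_mul, E_X]
  refine LinearMap.ext fun f => ?_
  rw [Module.End.mul_apply]
  have : (E (C (a i))) (pd i f) = a i • (pd i f) := by
    rw [show (C (a i) : MvPolynomial (Fin 3) ℝ) = algebraMap ℝ _ (a i) from rfl,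
       AlgHom.commutes]
    rfl
  rw [this]
  rfl

/-- The design criterion: divisibility of the power-sum polynomial by `r²`. -/
lemma design_of_div (P : Finset (Fin 3 → ℝ)) (hne : P.Nonempty)
    (hsph : ∀ x ∈ P, ∑ i, x i ^ 2 = 1) (t : ℕ)
    (g : MvPolynomial (Fin 3) ℝ)
    (hdiv : (∑ x0 ∈ P, (∑ i, C (x0 i) * X i) ^ t) = (∑ i, X i ^ 2) * g) :
    IsHarmonicIndexDesign 3 t P := by
  refine ⟨hne, hsph, fun f hf hhom => ?_⟩
  have h1 : E (∑ x0 ∈ P, (∑ i, C (x0 i) * X i) ^ t) f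
      = C ((t.factorial : ℝ) * ∑ x0 ∈ P, eval x0 f) := by
    rw [map_sum, LinearMap.sum_apply]
    rw [Finset.sum_congr rfl fun x0 _ => by
      rw [map_pow, E_linear, La_pow_homogeneous x0 t f hhom]]
    rw [← map_sum]
    congr 1
    rw [Finset.mul_sum]
  have h2 : E ((∑ i, X i ^ 2) * g) f = 0 := by
    rw [mul_comm, map_mul, Module.End.mul_apply, E_laplacian, hf, map_zero]
  rw [hdiv, h2] at h1
  have h3 : (t.factorial : ℝ) * ∑ x0 ∈ P, eval x0 f = 0 := by
    have := h1.symm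
    rwa [MvPolynomial.C_eq_zero] at this
  have h4 : (t.factorial : ℝ) ≠ 0 := Nat.cast_ne_zero.mpr (Nat.factorial_ne_zero t)
  exact (mul_eq_zero.mp h3).resolve_left h4


noncomputable def cc : ℝ := (Real.sqrt (1 + goldenRatio' ^ 2))⁻¹
noncomputable def v1 : Fin 3 → ℝ := ![0, 1, goldenRatio']
noncomputable def v2 : Fin 3 → ℝ := ![0, 1, -goldenRatio']
noncomputable def v3 : Fin 3 → ℝ := ![1, goldenRatio', 0]
noncomputable def v4 : Fin 3 → ℝ := ![1, -goldenRatio', 0]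
noncomputable def v5 : Fin 3 → ℝ := ![goldenRatio', 0, 1]
noncomputable def v6 : Fin 3 → ℝ := ![-goldenRatio', 0, 1]

lemma icosa_eq : icosahedronHalf = {cc • v1, cc • v2, cc • v3, cc • v4, cc • v5, cc • v6} := rfl

lemma hs5 : Real.sqrt 5 * Real.sqrt 5 = 5 := Real.mul_self_sqrt (by norm_num)
lemma sqrt5_gt : (2:ℝ) < Real.sqrt 5 := by
  have h : Real.sqrt 4 < Real.sqrt 5 := Real.sqrt_lt_sqrt (by norm_num) (by norm_num)
  rwa [show (4:ℝ) = 2^2 by norm_num, Real.sqrt_sq (by norm_num : (0:ℝ) ≤ 2)] at h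
lemma phi_gt : (3/2 : ℝ) < goldenRatio' := by rw [goldenRatio']; linarith [sqrt5_gt]
lemma phi_pos : 0 < goldenRatio' := lt_trans (by norm_num) phi_gt
lemma u_pos : 0 < 1 + goldenRatio' ^ 2 := by positivity
lemma cc_pos : 0 < cc := by rw [cc]; exact inv_pos.mpr (Real.sqrt_pos.mpr u_pos)
lemma cc_ne : cc ≠ 0 := ne_of_gt cc_pos
lemma hcc1 : cc ^ 2 * (1 + goldenRatio' ^ 2) = 1 := by
  rw [cc, inv_pow, Real.sq_sqrt (le_of_lt u_pos), inv_mul_cancel₀ (ne_of_gt u_pos)]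

lemma smul_ne' {c : ℝ} (hc : c ≠ 0) {v w : Fin 3 → ℝ} (i : Fin 3) (h : v i ≠ w i) :
    c • v ≠ c • w := fun he => h (mul_left_cancel₀ hc (by
      simpa [Pi.smul_apply, smul_eq_mul] using congrFun he i))

lemma n12 : cc • v1 ≠ cc • v2 := smul_ne' cc_ne 2 (by
  simp only [v1, v2, Matrix.cons_val_zero, Matrix.cons_val_one, Matrix.head_cons,
    Matrix.cons_val_two, Matrix.tail_cons]
  intro h; linarith [phi_pos])

lemma n13 : cc • v1 ≠ cc • v3 := smul_ne' cc_ne 0 (by norm_num [v1, v3])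

lemma n14 : cc • v1 ≠ cc • v4 := smul_ne' cc_ne 0 (by norm_num [v1, v4])

lemma n15 : cc • v1 ≠ cc • v5 := smul_ne' cc_ne 0 (by
  simp only [v1, v5, Matrix.cons_val_zero, Matrix.cons_val_one, Matrix.head_cons,
    Matrix.cons_val_two, Matrix.tail_cons]
  intro h; linarith [phi_pos])

lemma n16 : cc • v1 ≠ cc • v6 := smul_ne' cc_ne 0 (by
  simp only [v1, v6, Matrix.cons_val_zero, Matrix.cons_val_one, Matrix.head_cons,
    Matrix.cons_val_two, Matrix.tail_cons]
  intro h; linarith [phi_pos])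

lemma n23 : cc • v2 ≠ cc • v3 := smul_ne' cc_ne 0 (by norm_num [v2, v3])

lemma n24 : cc • v2 ≠ cc • v4 := smul_ne' cc_ne 0 (by norm_num [v2, v4])

lemma n25 : cc • v2 ≠ cc • v5 := smul_ne' cc_ne 0 (by
  simp only [v2, v5, Matrix.cons_val_zero, Matrix.cons_val_one, Matrix.head_cons,
    Matrix.cons_val_two, Matrix.tail_cons]
  intro h; linarith [phi_pos])

lemma n26 : cc • v2 ≠ cc • v6 := smul_ne' cc_ne 0 (by
  simp only [v2, v6, Matrix.cons_val_zero, Matrix.cons_val_one, Matrix.head_cons,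
    Matrix.cons_val_two, Matrix.tail_cons]
  intro h; linarith [phi_pos])

lemma n34 : cc • v3 ≠ cc • v4 := smul_ne' cc_ne 1 (by
  simp only [v3, v4, Matrix.cons_val_zero, Matrix.cons_val_one, Matrix.head_cons,
    Matrix.cons_val_two, Matrix.tail_cons]
  intro h; linarith [phi_pos])

lemma n35 : cc • v3 ≠ cc • v5 := smul_ne' cc_ne 0 (by
  simp only [v3, v5, Matrix.cons_val_zero, Matrix.cons_val_one, Matrix.head_cons,
    Matrix.cons_val_two, Matrix.tail_cons]
  intro h; linarith [phi_gt])

lemma n36 : cc • v3 ≠ cc • v6 := smul_ne' cc_ne 0 (by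
  simp only [v3, v6, Matrix.cons_val_zero, Matrix.cons_val_one, Matrix.head_cons,
    Matrix.cons_val_two, Matrix.tail_cons]
  intro h; linarith [phi_pos])

lemma n45 : cc • v4 ≠ cc • v5 := smul_ne' cc_ne 0 (by
  simp only [v4, v5, Matrix.cons_val_zero, Matrix.cons_val_one, Matrix.head_cons,
    Matrix.cons_val_two, Matrix.tail_cons]
  intro h; linarith [phi_gt])

lemma n46 : cc • v4 ≠ cc • v6 := smul_ne' cc_ne 0 (by
  simp only [v4, v6, Matrix.cons_val_zero, Matrix.cons_val_one, Matrix.head_cons,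
    Matrix.cons_val_two, Matrix.tail_cons]
  intro h; linarith [phi_pos])

lemma n56 : cc • v5 ≠ cc • v6 := smul_ne' cc_ne 0 (by
  simp only [v5, v6, Matrix.cons_val_zero, Matrix.cons_val_one, Matrix.head_cons,
    Matrix.cons_val_two, Matrix.tail_cons]
  intro h; linarith [phi_pos])


lemma icosa_card : icosahedronHalf.card = 6 := by
  rw [icosa_eq]
  rw [Finset.card_insert_of_notMem (by simp only [Finset.mem_insert, Finset.mem_singleton, not_or]; exact ⟨n12, n13, n14, n15, n16⟩),
      Finset.card_insert_of_notMem (by simp only [Finset.mem_insert, Finset.mem_singleton, not_or]; exact ⟨n23, n24, n25, n26⟩),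
      Finset.card_insert_of_notMem (by simp only [Finset.mem_insert, Finset.mem_singleton, not_or]; exact ⟨n34, n35, n36⟩),
      Finset.card_insert_of_notMem (by simp only [Finset.mem_insert, Finset.mem_singleton, not_or]; exact ⟨n45, n46⟩),
      Finset.card_insert_of_notMem (by simp only [Finset.mem_singleton]; exact n56),
      Finset.card_singleton]

lemma sum_expand {M : Type*} [AddCommMonoid M] (g : (Fin 3 → ℝ) → M) :
    ∑ x ∈ icosahedronHalf, g x
      = g (cc • v1) + (g (cc • v2) + (g (cc • v3) + (g (cc • v4) + (g (cc • v5) + g (cc • v6))))) := by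
  rw [icosa_eq]
  rw [Finset.sum_insert (by simp only [Finset.mem_insert, Finset.mem_singleton, not_or]; exact ⟨n12, n13, n14, n15, n16⟩),
      Finset.sum_insert (by simp only [Finset.mem_insert, Finset.mem_singleton, not_or]; exact ⟨n23, n24, n25, n26⟩),
      Finset.sum_insert (by simp only [Finset.mem_insert, Finset.mem_singleton, not_or]; exact ⟨n34, n35, n36⟩),
      Finset.sum_insert (by simp only [Finset.mem_insert, Finset.mem_singleton, not_or]; exact ⟨n45, n46⟩),
      Finset.sum_insert (by simp only [Finset.mem_singleton]; exact n56),
      Finset.sum_singleton]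

lemma icosa_sphere : ∀ x ∈ icosahedronHalf, ∑ i, x i ^ 2 = 1 := by
  intro x hx
  rw [icosa_eq] at hx
  simp only [Finset.mem_insert, Finset.mem_singleton] at hx
  rcases hx with rfl|rfl|rfl|rfl|rfl|rfl <;>
  · rw [Fin.sum_univ_three]
    simp only [Pi.smul_apply, smul_eq_mul, v1, v2, v3, v4, v5, v6, Matrix.cons_val_zero,
    Matrix.cons_val_one, Matrix.head_cons, Matrix.cons_val_two, Matrix.tail_cons]
    linear_combination hcc1

noncomputable def H8 : MvPolynomial (Fin 3) ℝ :=
  MvPolynomial.C ((49 : ℝ) + (21 : ℝ) * Real.sqrt 5) * MvPolynomial.X (2:Fin 3)^6 +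
  MvPolynomial.C ((455 : ℝ) + (203 : ℝ) * Real.sqrt 5) * MvPolynomial.X (1:Fin 3)^2 * MvPolynomial.X (2:Fin 3)^4 +
  MvPolynomial.C ((35 : ℝ) + (7 : ℝ) * Real.sqrt 5) * MvPolynomial.X (1:Fin 3)^4 * MvPolynomial.X (2:Fin 3)^2 +
  MvPolynomial.C ((49 : ℝ) + (21 : ℝ) * Real.sqrt 5) * MvPolynomial.X (1:Fin 3)^6 +
  MvPolynomial.C ((35 : ℝ) + (7 : ℝ) * Real.sqrt 5) * MvPolynomial.X (0:Fin 3)^2 * MvPolynomial.X (2:Fin 3)^4 +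
  MvPolynomial.C ((-490 : ℝ) + (-210 : ℝ) * Real.sqrt 5) * MvPolynomial.X (0:Fin 3)^2 * MvPolynomial.X (1:Fin 3)^2 * MvPolynomial.X (2:Fin 3)^2 +
  MvPolynomial.C ((455 : ℝ) + (203 : ℝ) * Real.sqrt 5) * MvPolynomial.X (0:Fin 3)^2 * MvPolynomial.X (1:Fin 3)^4 +
  MvPolynomial.C ((455 : ℝ) + (203 : ℝ) * Real.sqrt 5) * MvPolynomial.X (0:Fin 3)^4 * MvPolynomial.X (2:Fin 3)^2 +
  MvPolynomial.C ((35 : ℝ) + (7 : ℝ) * Real.sqrt 5) * MvPolynomial.X (0:Fin 3)^4 * MvPolynomial.X (1:Fin 3)^2 +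
  MvPolynomial.C ((49 : ℝ) + (21 : ℝ) * Real.sqrt 5) * MvPolynomial.X (0:Fin 3)^6

noncomputable def H14 : MvPolynomial (Fin 3) ℝ :=
  MvPolynomial.C ((845 : ℝ) + (377 : ℝ) * Real.sqrt 5) * MvPolynomial.X (2:Fin 3)^12 +
  MvPolynomial.C ((28457 : ℝ) + (12727 : ℝ) * Real.sqrt 5) * MvPolynomial.X (1:Fin 3)^2 * MvPolynomial.X (2:Fin 3)^10 +
  MvPolynomial.C ((94666 : ℝ) + (42328 : ℝ) * Real.sqrt 5) * MvPolynomial.X (1:Fin 3)^4 * MvPolynomial.X (2:Fin 3)^8 +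
  MvPolynomial.C ((46475 : ℝ) + (20735 : ℝ) * Real.sqrt 5) * MvPolynomial.X (1:Fin 3)^6 * MvPolynomial.X (2:Fin 3)^6 +
  MvPolynomial.C ((7579 : ℝ) + (3289 : ℝ) * Real.sqrt 5) * MvPolynomial.X (1:Fin 3)^8 * MvPolynomial.X (2:Fin 3)^4 +
  MvPolynomial.C ((-572 : ℝ) + (-286 : ℝ) * Real.sqrt 5) * MvPolynomial.X (1:Fin 3)^10 * MvPolynomial.X (2:Fin 3)^2 +
  MvPolynomial.C ((845 : ℝ) + (377 : ℝ) * Real.sqrt 5) * MvPolynomial.X (1:Fin 3)^12 +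
  MvPolynomial.C ((-572 : ℝ) + (-286 : ℝ) * Real.sqrt 5) * MvPolynomial.X (0:Fin 3)^2 * MvPolynomial.X (2:Fin 3)^10 +
  MvPolynomial.C ((-27885 : ℝ) + (-12441 : ℝ) * Real.sqrt 5) * MvPolynomial.X (0:Fin 3)^2 * MvPolynomial.X (1:Fin 3)^2 * MvPolynomial.X (2:Fin 3)^8 +
  MvPolynomial.C ((-66781 : ℝ) + (-29887 : ℝ) * Real.sqrt 5) * MvPolynomial.X (0:Fin 3)^2 * MvPolynomial.X (1:Fin 3)^4 * MvPolynomial.X (2:Fin 3)^6 +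
  MvPolynomial.C ((20306 : ℝ) + (9152 : ℝ) * Real.sqrt 5) * MvPolynomial.X (0:Fin 3)^2 * MvPolynomial.X (1:Fin 3)^6 * MvPolynomial.X (2:Fin 3)^4 +
  MvPolynomial.C ((-27885 : ℝ) + (-12441 : ℝ) * Real.sqrt 5) * MvPolynomial.X (0:Fin 3)^2 * MvPolynomial.X (1:Fin 3)^8 * MvPolynomial.X (2:Fin 3)^2 +
  MvPolynomial.C ((28457 : ℝ) + (12727 : ℝ) * Real.sqrt 5) * MvPolynomial.X (0:Fin 3)^2 * MvPolynomial.X (1:Fin 3)^10 +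
  MvPolynomial.C ((7579 : ℝ) + (3289 : ℝ) * Real.sqrt 5) * MvPolynomial.X (0:Fin 3)^4 * MvPolynomial.X (2:Fin 3)^8 +
  MvPolynomial.C ((20306 : ℝ) + (9152 : ℝ) * Real.sqrt 5) * MvPolynomial.X (0:Fin 3)^4 * MvPolynomial.X (1:Fin 3)^2 * MvPolynomial.X (2:Fin 3)^6 +
  MvPolynomial.C ((46475 : ℝ) + (20735 : ℝ) * Real.sqrt 5) * MvPolynomial.X (0:Fin 3)^4 * MvPolynomial.X (1:Fin 3)^4 * MvPolynomial.X (2:Fin 3)^4 +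
  MvPolynomial.C ((-66781 : ℝ) + (-29887 : ℝ) * Real.sqrt 5) * MvPolynomial.X (0:Fin 3)^4 * MvPolynomial.X (1:Fin 3)^6 * MvPolynomial.X (2:Fin 3)^2 +
  MvPolynomial.C ((94666 : ℝ) + (42328 : ℝ) * Real.sqrt 5) * MvPolynomial.X (0:Fin 3)^4 * MvPolynomial.X (1:Fin 3)^8 +
  MvPolynomial.C ((46475 : ℝ) + (20735 : ℝ) * Real.sqrt 5) * MvPolynomial.X (0:Fin 3)^6 * MvPolynomial.X (2:Fin 3)^6 +
  MvPolynomial.C ((-66781 : ℝ) + (-29887 : ℝ) * Real.sqrt 5) * MvPolynomial.X (0:Fin 3)^6 * MvPolynomial.X (1:Fin 3)^2 * MvPolynomial.X (2:Fin 3)^4 +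
  MvPolynomial.C ((20306 : ℝ) + (9152 : ℝ) * Real.sqrt 5) * MvPolynomial.X (0:Fin 3)^6 * MvPolynomial.X (1:Fin 3)^4 * MvPolynomial.X (2:Fin 3)^2 +
  MvPolynomial.C ((46475 : ℝ) + (20735 : ℝ) * Real.sqrt 5) * MvPolynomial.X (0:Fin 3)^6 * MvPolynomial.X (1:Fin 3)^6 +
  MvPolynomial.C ((94666 : ℝ) + (42328 : ℝ) * Real.sqrt 5) * MvPolynomial.X (0:Fin 3)^8 * MvPolynomial.X (2:Fin 3)^4 +
  MvPolynomial.C ((-27885 : ℝ) + (-12441 : ℝ) * Real.sqrt 5) * MvPolynomial.X (0:Fin 3)^8 * MvPolynomial.X (1:Fin 3)^2 * MvPolynomial.X (2:Fin 3)^2 +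
  MvPolynomial.C ((7579 : ℝ) + (3289 : ℝ) * Real.sqrt 5) * MvPolynomial.X (0:Fin 3)^8 * MvPolynomial.X (1:Fin 3)^4 +
  MvPolynomial.C ((28457 : ℝ) + (12727 : ℝ) * Real.sqrt 5) * MvPolynomial.X (0:Fin 3)^10 * MvPolynomial.X (2:Fin 3)^2 +
  MvPolynomial.C ((-572 : ℝ) + (-286 : ℝ) * Real.sqrt 5) * MvPolynomial.X (0:Fin 3)^10 * MvPolynomial.X (1:Fin 3)^2 +
  MvPolynomial.C ((845 : ℝ) + (377 : ℝ) * Real.sqrt 5) * MvPolynomial.X (0:Fin 3)^12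

set_option maxHeartbeats 2000000 in
lemma hdiv8 : (∑ x0 ∈ icosahedronHalf, (∑ i, MvPolynomial.C (x0 i) * MvPolynomial.X i) ^ 8)
    = (∑ i, (MvPolynomial.X i : MvPolynomial (Fin 3) ℝ) ^ 2) * (MvPolynomial.C (cc ^ 8) * H8) := by
  apply MvPolynomial.funext
  intro x
  rw [map_sum, sum_expand (fun x0 => MvPolynomial.eval x ((∑ i, MvPolynomial.C (x0 i) * MvPolynomial.X i) ^ 8))]
  simp only [map_pow, map_sum, map_mul, map_add, MvPolynomial.eval_C, MvPolynomial.eval_X,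
    Fin.sum_univ_three, H8, goldenRatio', Pi.smul_apply, smul_eq_mul, v1, v2, v3, v4, v5, v6, Matrix.cons_val_zero,
    Matrix.cons_val_one, Matrix.head_cons, Matrix.cons_val_two, Matrix.tail_cons]
  linear_combination (cc ^ 8 * ((1203/128 : ℝ)*(x 2)^8 + (67/16 : ℝ)*(x 2)^8*Real.sqrt 5 + (235/128 : ℝ)*(x 2)^8*Real.sqrt 5^2 + (3/4 : ℝ)*(x 2)^8*Real.sqrt 5^3 + (33/128 : ℝ)*(x 2)^8*Real.sqrt 5^4 + (1/16 : ℝ)*(x 2)^8*Real.sqrt 5^5 + (1/128 : ℝ)*(x 2)^8*Real.sqrt 5^6 + (805/8 : ℝ)*(x 1)^2*(x 2)^6 + (175/4 : ℝ)*(x 1)^2*(x 2)^6*Real.sqrt 5 + (35/2 : ℝ)*(x 1)^2*(x 2)^6*Real.sqrt 5^2 + (21/4 : ℝ)*(x 1)^2*(x 2)^6*Real.sqrt 5^3 + (7/8 : ℝ)*(x 1)^2*(x 2)^6*Real.sqrt 5^4 + (385/4 : ℝ)*(x 1)^4*(x 2)^4 + (35 : ℝ)*(x 1)^4*(x 2)^4*Real.sqrt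 5 + (35/4 : ℝ)*(x 1)^4*(x 2)^4*Real.sqrt 5^2 + (14 : ℝ)*(x 1)^6*(x 2)^2 + (1203/128 : ℝ)*(x 1)^8 + (67/16 : ℝ)*(x 1)^8*Real.sqrt 5 + (235/128 : ℝ)*(x 1)^8*Real.sqrt 5^2 + (3/4 : ℝ)*(x 1)^8*Real.sqrt 5^3 + (33/128 : ℝ)*(x 1)^8*Real.sqrt 5^4 + (1/16 : ℝ)*(x 1)^8*Real.sqrt 5^5 + (1/128 : ℝ)*(x 1)^8*Real.sqrt 5^6 + (14 : ℝ)*(x 0)^2*(x 2)^6 + (805/8 : ℝ)*(x 0)^2*(x 1)^6 + (175/4 : ℝ)*(x 0)^2*(x 1)^6*Real.sqrt 5 + (35/2 : ℝ)*(x 0)^2*(x 1)^6*Real.sqrt 5^2 + (21/4 : ℝ)*(x 0)^2*(x 1)^6*Real.sqrt 5^3 + (7/8 : ℝ)*(x 0)^2*(x 1)^6*Real.sqrt 5^4 + (385/4 : ℝ)*(x 0)^4*(x 2)^4 + (35 : ℝ)*(x 0)^4*(x 2)^4*Real.sqrt 5 + (35/4 : ℝ)*(x 0)^4*(x 2)^4*Real.sqrt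 5^2 + (385/4 : ℝ)*(x 0)^4*(x 1)^4 + (35 : ℝ)*(x 0)^4*(x 1)^4*Real.sqrt 5 + (35/4 : ℝ)*(x 0)^4*(x 1)^4*Real.sqrt 5^2 + (805/8 : ℝ)*(x 0)^6*(x 2)^2 + (175/4 : ℝ)*(x 0)^6*(x 2)^2*Real.sqrt 5 + (35/2 : ℝ)*(x 0)^6*(x 2)^2*Real.sqrt 5^2 + (21/4 : ℝ)*(x 0)^6*(x 2)^2*Real.sqrt 5^3 + (7/8 : ℝ)*(x 0)^6*(x 2)^2*Real.sqrt 5^4 + (14 : ℝ)*(x 0)^6*(x 1)^2 + (1203/128 : ℝ)*(x 0)^8 + (67/16 : ℝ)*(x 0)^8*Real.sqrt 5 + (235/128 : ℝ)*(x 0)^8*Real.sqrt 5^2 + (3/4 : ℝ)*(x 0)^8*Real.sqrt 5^3 + (33/128 : ℝ)*(x 0)^8*Real.sqrt 5^4 + (1/16 : ℝ)*(x 0)^8*Real.sqrt 5^5 + (1/128 : ℝ)*(x 0)^8*Real.sqrt 5^6)) * hs5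

set_option maxHeartbeats 4000000 in
lemma hdiv14 : (∑ x0 ∈ icosahedronHalf, (∑ i, MvPolynomial.C (x0 i) * MvPolynomial.X i) ^ 14)
    = (∑ i, (MvPolynomial.X i : MvPolynomial (Fin 3) ℝ) ^ 2) * (MvPolynomial.C (cc ^ 14) * H14) := by
  apply MvPolynomial.funext
  intro x
  rw [map_sum, sum_expand (fun x0 => MvPolynomial.eval x ((∑ i, MvPolynomial.C (x0 i) * MvPolynomial.X i) ^ 14))]
  simp only [map_pow, map_sum, map_mul, map_add, MvPolynomial.eval_C, MvPolynomial.eval_X,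
    Fin.sum_univ_three, H14, goldenRatio', Pi.smul_apply, smul_eq_mul, v1, v2, v3, v4, v5, v6, Matrix.cons_val_zero,
    Matrix.cons_val_one, Matrix.head_cons, Matrix.cons_val_two, Matrix.tail_cons]
  linear_combination (cc ^ 14 * ((1381171/8192 : ℝ)*(x 2)^14 + (308837/4096 : ℝ)*(x 2)^14*Real.sqrt 5 + (34527/1024 : ℝ)*(x 2)^14*Real.sqrt 5^2 + (61731/4096 : ℝ)*(x 2)^14*Real.sqrt 5^3 + (55043/8192 : ℝ)*(x 2)^14*Real.sqrt 5^4 + (6073/2048 : ℝ)*(x 2)^14*Real.sqrt 5^5 + (1301/1024 : ℝ)*(x 2)^14*Real.sqrt 5^6 + (1043/2048 : ℝ)*(x 2)^14*Real.sqrt 5^7 + (1481/8192 : ℝ)*(x 2)^14*Real.sqrt 5^8 + (217/4096 : ℝ)*(x 2)^14*Real.sqrt 5^9 + (3/256 : ℝ)*(x 2)^14*Real.sqrt 5^10 + (7/4096 : ℝ)*(x 2)^14*Real.sqrt 5^11 + (1/8192 : ℝ)*(x 2)^14*Real.sqrt 5^12 + (12002081/2048 : ℝ)*(x 1)^2*(x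 2)^12 + (1341795/512 : ℝ)*(x 1)^2*(x 2)^12*Real.sqrt 5 + (2399215/2048 : ℝ)*(x 1)^2*(x 2)^12*Real.sqrt 5^2 + (133679/256 : ℝ)*(x 1)^2*(x 2)^12*Real.sqrt 5^3 + (235417/1024 : ℝ)*(x 1)^2*(x 2)^12*Real.sqrt 5^4 + (12467/128 : ℝ)*(x 1)^2*(x 2)^12*Real.sqrt 5^5 + (38675/1024 : ℝ)*(x 1)^2*(x 2)^12*Real.sqrt 5^6 + (3185/256 : ℝ)*(x 1)^2*(x 2)^12*Real.sqrt 5^7 + (6461/2048 : ℝ)*(x 1)^2*(x 2)^12*Real.sqrt 5^8 + (273/512 : ℝ)*(x 1)^2*(x 2)^12*Real.sqrt 5^9 + (91/2048 : ℝ)*(x 1)^2*(x 2)^12*Real.sqrt 5^10 + (12607595/512 : ℝ)*(x 1)^4*(x 2)^10 + (2817815/256 : ℝ)*(x 1)^4*(x 2)^10*Real.sqrt 5 + (1256255/256 : ℝ)*(x 1)^4*(x 2)^10*Real.sqrt 5^2 + (551551/256 : ℝ)*(x 1)^4*(x 2)^10*Real.sqrt 5^3 + (115115/128 : ℝ)*(x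 1)^4*(x 2)^10*Real.sqrt 5^4 + (85085/256 : ℝ)*(x 1)^4*(x 2)^10*Real.sqrt 5^5 + (25025/256 : ℝ)*(x 1)^4*(x 2)^10*Real.sqrt 5^6 + (5005/256 : ℝ)*(x 1)^4*(x 2)^10*Real.sqrt 5^7 + (1001/512 : ℝ)*(x 1)^4*(x 2)^10*Real.sqrt 5^8 + (3612609/128 : ℝ)*(x 1)^6*(x 2)^8 + (201201/16 : ℝ)*(x 1)^6*(x 2)^8*Real.sqrt 5 + (705705/128 : ℝ)*(x 1)^6*(x 2)^8*Real.sqrt 5^2 + (9009/4 : ℝ)*(x 1)^6*(x 2)^8*Real.sqrt 5^3 + (99099/128 : ℝ)*(x 1)^6*(x 2)^8*Real.sqrt 5^4 + (3003/16 : ℝ)*(x 1)^6*(x 2)^8*Real.sqrt 5^5 + (3003/128 : ℝ)*(x 1)^6*(x 2)^8*Real.sqrt 5^6 + (345345/32 : ℝ)*(x 1)^8*(x 2)^6 + (75075/16 : ℝ)*(x 1)^8*(x 2)^6*Real.sqrt 5 + (15015/8 : ℝ)*(x 1)^8*(x 2)^6*Real.sqrt 5^2 + (9009/16 : ℝ)*(x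 1)^8*(x 2)^6*Real.sqrt 5^3 + (3003/32 : ℝ)*(x 1)^8*(x 2)^6*Real.sqrt 5^4 + (11011/8 : ℝ)*(x 1)^10*(x 2)^4 + (1001/2 : ℝ)*(x 1)^10*(x 2)^4*Real.sqrt 5 + (1001/8 : ℝ)*(x 1)^10*(x 2)^4*Real.sqrt 5^2 + (91/2 : ℝ)*(x 1)^12*(x 2)^2 + (1381171/8192 : ℝ)*(x 1)^14 + (308837/4096 : ℝ)*(x 1)^14*Real.sqrt 5 + (34527/1024 : ℝ)*(x 1)^14*Real.sqrt 5^2 + (61731/4096 : ℝ)*(x 1)^14*Real.sqrt 5^3 + (55043/8192 : ℝ)*(x 1)^14*Real.sqrt 5^4 + (6073/2048 : ℝ)*(x 1)^14*Real.sqrt 5^5 + (1301/1024 : ℝ)*(x 1)^14*Real.sqrt 5^6 + (1043/2048 : ℝ)*(x 1)^14*Real.sqrt 5^7 + (1481/8192 : ℝ)*(x 1)^14*Real.sqrt 5^8 + (217/4096 : ℝ)*(x 1)^14*Real.sqrt 5^9 + (3/256 : ℝ)*(x 1)^14*Real.sqrt 5^10 + (7/4096 : ℝ)*(x 1)^14*Real.sqrt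 5^11 + (1/8192 : ℝ)*(x 1)^14*Real.sqrt 5^12 + (91/2 : ℝ)*(x 0)^2*(x 2)^12 + (12002081/2048 : ℝ)*(x 0)^2*(x 1)^12 + (1341795/512 : ℝ)*(x 0)^2*(x 1)^12*Real.sqrt 5 + (2399215/2048 : ℝ)*(x 0)^2*(x 1)^12*Real.sqrt 5^2 + (133679/256 : ℝ)*(x 0)^2*(x 1)^12*Real.sqrt 5^3 + (235417/1024 : ℝ)*(x 0)^2*(x 1)^12*Real.sqrt 5^4 + (12467/128 : ℝ)*(x 0)^2*(x 1)^12*Real.sqrt 5^5 + (38675/1024 : ℝ)*(x 0)^2*(x 1)^12*Real.sqrt 5^6 + (3185/256 : ℝ)*(x 0)^2*(x 1)^12*Real.sqrt 5^7 + (6461/2048 : ℝ)*(x 0)^2*(x 1)^12*Real.sqrt 5^8 + (273/512 : ℝ)*(x 0)^2*(x 1)^12*Real.sqrt 5^9 + (91/2048 : ℝ)*(x 0)^2*(x 1)^12*Real.sqrt 5^10 + (11011/8 : ℝ)*(x 0)^4*(x 2)^10 + (1001/2 : ℝ)*(x 0)^4*(x 2)^10*Real.sqrt 5 + (1001/8 :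 ℝ)*(x 0)^4*(x 2)^10*Real.sqrt 5^2 + (12607595/512 : ℝ)*(x 0)^4*(x 1)^10 + (2817815/256 : ℝ)*(x 0)^4*(x 1)^10*Real.sqrt 5 + (1256255/256 : ℝ)*(x 0)^4*(x 1)^10*Real.sqrt 5^2 + (551551/256 : ℝ)*(x 0)^4*(x 1)^10*Real.sqrt 5^3 + (115115/128 : ℝ)*(x 0)^4*(x 1)^10*Real.sqrt 5^4 + (85085/256 : ℝ)*(x 0)^4*(x 1)^10*Real.sqrt 5^5 + (25025/256 : ℝ)*(x 0)^4*(x 1)^10*Real.sqrt 5^6 + (5005/256 : ℝ)*(x 0)^4*(x 1)^10*Real.sqrt 5^7 + (1001/512 : ℝ)*(x 0)^4*(x 1)^10*Real.sqrt 5^8 + (345345/32 : ℝ)*(x 0)^6*(x 2)^8 + (75075/16 : ℝ)*(x 0)^6*(x 2)^8*Real.sqrt 5 + (15015/8 : ℝ)*(x 0)^6*(x 2)^8*Real.sqrt 5^2 + (9009/16 : ℝ)*(x 0)^6*(x 2)^8*Real.sqrt 5^3 + (3003/32 : ℝ)*(x 0)^6*(x 2)^8*Real.sqrt 5^4 + (3612609/128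 : ℝ)*(x 0)^6*(x 1)^8 + (201201/16 : ℝ)*(x 0)^6*(x 1)^8*Real.sqrt 5 + (705705/128 : ℝ)*(x 0)^6*(x 1)^8*Real.sqrt 5^2 + (9009/4 : ℝ)*(x 0)^6*(x 1)^8*Real.sqrt 5^3 + (99099/128 : ℝ)*(x 0)^6*(x 1)^8*Real.sqrt 5^4 + (3003/16 : ℝ)*(x 0)^6*(x 1)^8*Real.sqrt 5^5 + (3003/128 : ℝ)*(x 0)^6*(x 1)^8*Real.sqrt 5^6 + (3612609/128 : ℝ)*(x 0)^8*(x 2)^6 + (201201/16 : ℝ)*(x 0)^8*(x 2)^6*Real.sqrt 5 + (705705/128 : ℝ)*(x 0)^8*(x 2)^6*Real.sqrt 5^2 + (9009/4 : ℝ)*(x 0)^8*(x 2)^6*Real.sqrt 5^3 + (99099/128 : ℝ)*(x 0)^8*(x 2)^6*Real.sqrt 5^4 + (3003/16 : ℝ)*(x 0)^8*(x 2)^6*Real.sqrt 5^5 + (3003/128 : ℝ)*(x 0)^8*(x 2)^6*Real.sqrt 5^6 + (345345/32 : ℝ)*(x 0)^8*(x 1)^6 + (75075/16 : ℝ)*(x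 0)^8*(x 1)^6*Real.sqrt 5 + (15015/8 : ℝ)*(x 0)^8*(x 1)^6*Real.sqrt 5^2 + (9009/16 : ℝ)*(x 0)^8*(x 1)^6*Real.sqrt 5^3 + (3003/32 : ℝ)*(x 0)^8*(x 1)^6*Real.sqrt 5^4 + (12607595/512 : ℝ)*(x 0)^10*(x 2)^4 + (2817815/256 : ℝ)*(x 0)^10*(x 2)^4*Real.sqrt 5 + (1256255/256 : ℝ)*(x 0)^10*(x 2)^4*Real.sqrt 5^2 + (551551/256 : ℝ)*(x 0)^10*(x 2)^4*Real.sqrt 5^3 + (115115/128 : ℝ)*(x 0)^10*(x 2)^4*Real.sqrt 5^4 + (85085/256 : ℝ)*(x 0)^10*(x 2)^4*Real.sqrt 5^5 + (25025/256 : ℝ)*(x 0)^10*(x 2)^4*Real.sqrt 5^6 + (5005/256 : ℝ)*(x 0)^10*(x 2)^4*Real.sqrt 5^7 + (1001/512 : ℝ)*(x 0)^10*(x 2)^4*Real.sqrt 5^8 + (11011/8 : ℝ)*(x 0)^10*(x 1)^4 + (1001/2 : ℝ)*(x 0)^10*(x 1)^4*Real.sqrt 5 + (1001/8 : ℝ)*(x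 0)^10*(x 1)^4*Real.sqrt 5^2 + (12002081/2048 : ℝ)*(x 0)^12*(x 2)^2 + (1341795/512 : ℝ)*(x 0)^12*(x 2)^2*Real.sqrt 5 + (2399215/2048 : ℝ)*(x 0)^12*(x 2)^2*Real.sqrt 5^2 + (133679/256 : ℝ)*(x 0)^12*(x 2)^2*Real.sqrt 5^3 + (235417/1024 : ℝ)*(x 0)^12*(x 2)^2*Real.sqrt 5^4 + (12467/128 : ℝ)*(x 0)^12*(x 2)^2*Real.sqrt 5^5 + (38675/1024 : ℝ)*(x 0)^12*(x 2)^2*Real.sqrt 5^6 + (3185/256 : ℝ)*(x 0)^12*(x 2)^2*Real.sqrt 5^7 + (6461/2048 : ℝ)*(x 0)^12*(x 2)^2*Real.sqrt 5^8 + (273/512 : ℝ)*(x 0)^12*(x 2)^2*Real.sqrt 5^9 + (91/2048 : ℝ)*(x 0)^12*(x 2)^2*Real.sqrt 5^10 + (91/2 : ℝ)*(x 0)^12*(x 1)^2 + (1381171/8192 : ℝ)*(x 0)^14 + (308837/4096 : ℝ)*(x 0)^14*Real.sqrt 5 + (34527/1024 : ℝ)*(x 0)^14*Real.sqrt 5^2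 + (61731/4096 : ℝ)*(x 0)^14*Real.sqrt 5^3 + (55043/8192 : ℝ)*(x 0)^14*Real.sqrt 5^4 + (6073/2048 : ℝ)*(x 0)^14*Real.sqrt 5^5 + (1301/1024 : ℝ)*(x 0)^14*Real.sqrt 5^6 + (1043/2048 : ℝ)*(x 0)^14*Real.sqrt 5^7 + (1481/8192 : ℝ)*(x 0)^14*Real.sqrt 5^8 + (217/4096 : ℝ)*(x 0)^14*Real.sqrt 5^9 + (3/256 : ℝ)*(x 0)^14*Real.sqrt 5^10 + (7/4096 : ℝ)*(x 0)^14*Real.sqrt 5^11 + (1/8192 : ℝ)*(x 0)^14*Real.sqrt 5^12)) * hs5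

end IcosaAux

/-- the antipodal half of a regular icosahedron is a spherical design of
harmonic index `8` and also of harmonic index `14` on `S²`; it has `6` points, so `A(3,8) ≤ 6`. -/
theorem icosahedronHalf_harmonic_index_designs :
    IsHarmonicIndexDesign 3 8 icosahedronHalf ∧
    IsHarmonicIndexDesign 3 14 icosahedronHalf ∧
    icosahedronHalf.card = 6 := by
  have hne : icosahedronHalf.Nonempty :=
    ⟨IcosaAux.cc • IcosaAux.v1, by rw [IcosaAux.icosa_eq]; exact Finset.mem_insert_self _ _⟩
  exact ⟨IcosaAux.design_of_div _ hne IcosaAux.icosa_sphere 8 _ IcosaAux.hdiv8,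
         IcosaAux.design_of_div _ hne IcosaAux.icosa_sphere 14 _ IcosaAux.hdiv14,
         IcosaAux.icosa_card⟩
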